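/- arXiv:2305.10152 — 4 statements merged into one kernel-verified Lean document; each statement's English description precedes it below -/
import Mathlib

section
/- Let S be a nonempty family of k-subsets of [n] with k-binomial decomposition |S| = C(a_0, k) + ... + C(a_t, k-t). Then for every i with 0 ≤ i ≤ k-1, the i-th iterated lower shadow satisfies |∂^i S| ≥ C(a_0, k-i) + C(a_1, k-1-i) + ... + C(a_t, k-t-i). -/
open Finset

/-- Generalized binomial coefficient `C(x, j)` for integers `x` and `j`:
`0` for `j < 0`, and the usual polynomial extension otherwise. -/
def izchoose (x : ℤ) (j : ℤ) : ℤ :=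
  if j < 0 then 0
  else if 0 ≤ x then ((x.toNat).choose j.toNat : ℤ)
  else (-1) ^ j.toNat * (((j - x - 1).toNat).choose j.toNat : ℤ)

/-- `kBinDecomp k m t a` : `m = C(a 0, k) + C(a 1, k-1) + ⋯ + C(a t, k - t)` is the
`k`-binomial (cascade) decomposition of `m`, with `a 0 > a 1 > ⋯ > a t ≥ k - t ≥ 1`. -/
def kBinDecomp (k m t : ℕ) (a : ℕ → ℕ) : Prop :=
  t + 1 ≤ k ∧ (∀ i, i < t → a (i + 1) < a i) ∧ k - t ≤ a t ∧
    m = ∑ i ∈ Finset.range (t + 1), (a i).choose (k - i)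

/-- Full `k`-binomial decomposition: `m = C(α 0, k) + ⋯ + C(α (k-1), 1)` with
`α 0 > ⋯ > α (k-2) ≥ α (k-1) ≥ 1` and all coefficients at least `1`. -/
def fullKBinDecomp (k m : ℕ) (α : ℕ → ℕ) : Prop :=
  (∀ i, i + 1 ≤ k - 2 → α (i + 1) < α i) ∧ (2 ≤ k → α (k - 1) ≤ α (k - 2)) ∧
    (∀ i, i < k → 1 ≤ α i) ∧ m = ∑ i ∈ Finset.range k, (α i).choose (k - i)

/-- `(β 0, …, β (k-1))` is the shadow `k`-binomial decomposition of the family `S`: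
for every `0 ≤ i ≤ k-1`, `|∂^i S| = C(β 0, k-i) + C(β 1, k-1-i) + ⋯ + C(β (k-1), 1-i)`,
where generalized integer binomial coefficients are used. -/
def shadowDecomp {n : ℕ} (k : ℕ) (S : Finset (Finset (Fin n))) (β : ℕ → ℤ) : Prop :=
  ∀ i, i < k → ((Finset.shadow^[i] S).card : ℤ) =
    ∑ j ∈ Finset.range k, izchoose (β j) ((k : ℤ) - i - j)

/-- `S` is extremal for the Kruskal–Katona theorem: the cardinality of its lower shadow
equals the Kruskal–Katona lower bound determined by the `k`-binomial decomposition of `|S|`. -/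
def IsExtremal {n : ℕ} (k : ℕ) (S : Finset (Finset (Fin n))) : Prop :=
  ∃ t a, kBinDecomp k S.card t a ∧
    (Finset.shadow S).card = ∑ i ∈ Finset.range (t + 1), (a i).choose (k - 1 - i)

/-- `S` is an initial segment in the colexicographic order among `k`-subsets of `Fin n`. -/
def IsInitColex (n k : ℕ) (S : Finset (Finset (Fin n))) : Prop :=
  (∀ s ∈ S, s.card = k) ∧
    ∀ s ∈ S, ∀ t : Finset (Fin n), t.card = k → toColex t < toColex s → t ∈ S


/-! By Kruskal–Katona (`Finset.iterated_kk`) the iterated shadows of `S` are at least as large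
as those of the colex initial segment `𝒞` with `|𝒞| = |S|`. Continuing the cascade
`a₀ > ⋯ > a_{t-1}` by `a_t - 1, a_t - 2, …` gives `g₀ > ⋯ > g_{k-1}`, and the colex rank formula
`|initSeg s| = 1 + ∑_{x ∈ s} C(x, #{y ∈ s | y ≤ x})` together with the identity
`C(b, v) = 1 + ∑_{l < v} C(b - 1 - l, v - l)` shows `𝒞 = initSeg {g₀, …, g_{k-1}}`. Shadowing an
initial segment drops the least element of its endpoint, so `∂^i 𝒞 = initSeg {g₀, …, g_{k-i-1}}`,
whose size the same two formulas turn into the cascade sum. -/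

open scoped FinsetFamily

namespace Finset.Colex

variable {α : Type*} [LinearOrder α] [Fintype α] {G : ℕ → α} {r : ℕ}

lemma shadow_initSeg_image_range (hG : StrictAntiOn G (Set.Iio (r + 1))) :
    ∂ (initSeg ((range (r + 1)).image G)) = initSeg ((range r).image G) := by
  have hne : ((range (r + 1)).image G).Nonempty := by simp
  have hmin : ((range (r + 1)).image G).min' hne = G r := by
    refine le_antisymm (min'_le _ _ (mem_image_of_mem G (by simp))) (le_min' _ _ _ ?_)
    simp only [mem_image, mem_range, forall_exists_index, and_imp, forall_apply_eq_imp_iff₂]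
    exact fun j hj => (hG.le_iff_ge (by simp) hj).2 (Nat.lt_succ_iff.1 hj)
  rw [shadow_initSeg hne, hmin, range_add_one, image_insert, erase_insert]
  simp only [mem_image, mem_range, not_exists, not_and]
  exact fun j hj => (hG (by simp; omega) (by simp) hj).ne'

lemma iterate_shadow_initSeg_image_range {i : ℕ} (hG : StrictAntiOn G (Set.Iio (r + i))) :
    ∂^[i] (initSeg ((range (r + i)).image G)) = initSeg ((range r).image G) := by
  induction i with
  | zero => rfl
  | succ i ih =>
    rw [← add_assoc] at hG
    rw [Function.iterate_succ_apply, ← add_assoc, shadow_initSeg_image_range hG,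
      ih (hG.mono (Set.Iio_subset_Iio (by omega)))]

variable [LocallyFiniteOrderBot α] {s : Finset α} {m : α}

lemma initSeg_insert_of_forall_lt (hm : ∀ x ∈ s, x < m) :
    initSeg (insert m s) = (Iio m).powersetCard (#s + 1) ∪ (initSeg s).image (insert m) := by
  have hms : m ∉ s := fun h => (hm m h).false
  have hle : ∀ x ∈ insert m s, x ≤ m := by
    simpa using fun x hx => (hm x hx).le
  ext u
  simp only [mem_initSeg, mem_union, mem_powersetCard, mem_image, card_insert_of_notMem hms]
  constructor
  · rintro ⟨hcard, hu⟩
    by_cases hmu : m ∈ u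
    · refine Or.inr ⟨u.erase m, ⟨?_, ?_⟩, insert_erase hmu⟩
      · rw [card_erase_of_mem hmu]; omega
      · have := (toColex_sdiff_le_toColex_sdiff (u := {m}) (by simpa) (by simp)).2 hu
        rwa [sdiff_singleton_eq_erase, sdiff_singleton_eq_erase, erase_insert hms] at this
    · refine Or.inl ⟨fun x hx => mem_Iio.2 ?_, hcard.symm⟩
      exact (forall_le_mono hu hle x hx).lt_of_ne (ne_of_mem_of_not_mem hx hmu)
  · rintro (⟨hsub, hcard⟩ | ⟨v, ⟨hcard, hv⟩, rfl⟩)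
    · refine ⟨hcard.symm, (toColex_lt_toColex_iff_exists_forall_lt.2 ⟨m, mem_insert_self _ _,
        fun h => (mem_Iio.1 (hsub h)).false, fun b hb _ => mem_Iio.1 (hsub hb)⟩).le⟩
    · have hmv : m ∉ v := fun h => (forall_lt_mono hv hm m h).false
      refine ⟨by rw [card_insert_of_notMem hmv, hcard], ?_⟩
      refine (toColex_sdiff_le_toColex_sdiff (u := {m}) (by simp) (by simp)).1 ?_
      rwa [sdiff_singleton_eq_erase, sdiff_singleton_eq_erase, erase_insert hms, erase_insert hmv]

lemma card_initSeg_insert_of_forall_lt (hm : ∀ x ∈ s, x < m) :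
    #(initSeg (insert m s)) = (#(Iio m)).choose (#s + 1) + #(initSeg s) := by
  have hnotin : ∀ v ∈ initSeg s, m ∉ v := fun v hv h =>
    (forall_lt_mono (mem_initSeg.1 hv).2 hm m h).false
  rw [initSeg_insert_of_forall_lt hm, card_union_of_disjoint, card_powersetCard,
    card_image_of_injOn]
  · intro v hv w hw h
    rw [← erase_insert (hnotin v hv), h, erase_insert (hnotin w hw)]
  · refine disjoint_left.2 fun u hu hu' => ?_
    obtain ⟨v, -, rfl⟩ := mem_image.1 hu'
    exact (mem_Iio.1 ((mem_powersetCard.1 hu).1 (mem_insert_self m v))).false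

lemma card_initSeg (s : Finset α) :
    #(initSeg s) = ∑ x ∈ s, (#(Iio x)).choose #{y ∈ s | y ≤ x} + 1 := by
  induction s using Finset.induction_on_max with
  | empty =>
    rw [sum_empty, zero_add, card_eq_one]
    exact ⟨∅, by ext t; simp +contextual [mem_initSeg, eq_comm (a := 0), card_eq_zero]⟩
  | insert m s hm ih =>
    have hms : m ∉ s := fun h => (hm m h).false
    have hlower : ∀ x ∈ s, {y ∈ insert m s | y ≤ x} = {y ∈ s | y ≤ x} := fun x hx => by
      rw [filter_insert, if_neg (not_le.2 (hm x hx))]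
    rw [card_initSeg_insert_of_forall_lt hm, sum_insert hms,
      sum_congr rfl fun x hx => by rw [hlower x hx], ih,
      filter_insert, if_pos le_rfl, card_insert_of_notMem (by simp [hms]),
      filter_true_of_mem fun x hx => (hm x hx).le]
    ring

lemma card_initSeg_image_range (hG : StrictAntiOn G (Set.Iio r)) :
    #(initSeg ((range r).image G)) = ∑ j ∈ range r, (#(Iio (G j))).choose (r - j) + 1 := by
  rw [card_initSeg, sum_image (hG.injOn.mono (by simp))]
  congr 1
  refine sum_congr rfl fun j hj => ?_
  rw [filter_image, card_image_of_injOn (hG.injOn.mono fun i hi => by simp_all)]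
  congr 2
  have : {i ∈ range r | G i ≤ G j} = Ico j r := by
    ext i
    simp only [mem_filter, mem_range, mem_Ico]
    have hjr : j < r := mem_range.1 hj
    constructor
    · rintro ⟨hir, hle⟩
      exact ⟨(hG.le_iff_ge hir hjr).1 hle, hir⟩
    · rintro ⟨hji, hir⟩
      exact ⟨hir, (hG.le_iff_ge hir hjr).2 hji⟩
  rw [this, Nat.card_Ico]

end Finset.Colex

lemma Nat.choose_eq_sum_range_choose_add_one {v b : ℕ} (h : v ≤ b) :
    b.choose v = ∑ l ∈ range v, (b - l - 1).choose (v - l) + 1 := by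
  induction v generalizing b with
  | zero => simp
  | succ v ih =>
    obtain ⟨c, rfl⟩ : ∃ c, b = c + 1 := ⟨b - 1, by omega⟩
    rw [sum_range_succ', Nat.choose_succ_succ, ih (by omega)]
    simp only [Nat.add_sub_cancel, Nat.sub_zero, Nat.add_sub_add_right]
    ring

lemma izchoose_natCast (x m : ℕ) : izchoose x m = x.choose m := by
  simp [izchoose]

lemma izchoose_natCast_sub (x : ℕ) {j r : ℕ} (h : j ≤ r) :
    izchoose x ((r : ℤ) - j) = x.choose (r - j) := by
  rw [← Nat.cast_sub h, izchoose_natCast]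

lemma izchoose_of_neg (x : ℤ) {j : ℤ} (h : j < 0) : izchoose x j = 0 := if_pos h

def cascadeElem (a : ℕ → ℕ) (t j : ℕ) : ℕ :=
  if j < t then a j else a t - (j - t) - 1

section

variable {a : ℕ → ℕ} {t : ℕ}

lemma cascadeElem_antitone (ha : ∀ j < t, a (j + 1) < a j) : Antitone (cascadeElem a t) := by
  refine antitone_nat_of_succ_le fun j => ?_
  unfold cascadeElem
  rcases lt_trichotomy (j + 1) t with hjt | rfl | htj
  · simp [hjt, (ha j (by omega)).le, show j < t by omega]
  · have := ha j (by omega)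
    simp only [lt_self_iff_false, if_false, Nat.sub_self, if_pos (Nat.lt_succ_self j)]
    omega
  · simp [show ¬ j + 1 < t by omega, show ¬ j < t by omega]; omega

lemma cascadeElem_strictAntiOn {k : ℕ} (ha : ∀ j < t, a (j + 1) < a j) (hat : k - t ≤ a t) :
    StrictAntiOn (cascadeElem a t) (Set.Iio k) := by
  have ha' := strictAntiOn_Iic_of_succ_lt ha
  intro p hp q hq hpq
  simp only [Set.mem_Iio] at hp hq
  unfold cascadeElem
  split_ifs with hqt hpt hpt
  · exact ha' (by simp; omega) (by simp; omega) hpq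
  · omega
  · have := ha' (a := p) (b := t) (by simp; omega) (by simp) hpt
    omega
  · omega

lemma sum_choose_cascadeElem {r : ℕ} (hr : r - t ≤ a t) :
    ((∑ j ∈ range r, (cascadeElem a t j).choose (r - j) + 1 : ℕ) : ℤ) =
      ∑ j ∈ range (t + 1), izchoose (a j) ((r : ℤ) - j) := by
  rcases le_or_gt r t with hrt | htr
  · rw [← sum_range_add_sum_Ico _ (by omega : r + 1 ≤ t + 1), sum_range_succ,
      sum_eq_zero (s := Ico _ _) fun j hj => izchoose_of_neg _ (by have := (mem_Ico.1 hj).1; omega)]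
    have hterm : ∀ j ∈ range r,
        izchoose (a j) ((r : ℤ) - j) = ((cascadeElem a t j).choose (r - j) : ℤ) := by
      intro j hj
      have hjr := mem_range.1 hj
      rw [izchoose_natCast_sub _ hjr.le, cascadeElem, if_pos (by omega)]
    rw [sum_congr rfl hterm, sub_self, ← Nat.cast_zero, izchoose_natCast, Nat.choose_zero_right]
    push_cast
    ring
  · have hterm : ∀ j ∈ range (t + 1),
        izchoose (a j) ((r : ℤ) - j) = ((a j).choose (r - j) : ℤ) :=
      fun j hj => izchoose_natCast_sub _ (by have := mem_range.1 hj; omega)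
    have htail : ∀ l ∈ range (r - t),
        (cascadeElem a t (t + l)).choose (r - (t + l)) = (a t - l - 1).choose (r - t - l) :=
      fun l _ => by rw [cascadeElem, if_neg (by omega)]; congr 1 <;> omega
    have hhead : ∀ j ∈ range t, (cascadeElem a t j).choose (r - j) = (a j).choose (r - j) :=
      fun j hj => by rw [cascadeElem, if_pos (mem_range.1 hj)]
    rw [sum_congr rfl hterm, ← Nat.cast_sum, sum_range_succ,
      Nat.choose_eq_sum_range_choose_add_one hr, ← sum_range_add_sum_Ico _ htr.le,
      sum_Ico_eq_sum_range, sum_congr rfl htail, sum_congr rfl hhead]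
    push_cast
    ring

end

lemma kBinDecomp.sum_choose_cascadeElem_add_one {k m t : ℕ} {a : ℕ → ℕ}
    (hdec : kBinDecomp k m t a) :
    ∑ j ∈ range k, (cascadeElem a t j).choose (k - j) + 1 = m := by
  obtain ⟨htk, -, hat, hm⟩ := hdec
  have hterm : ∀ j ∈ range (t + 1),
      izchoose (a j) ((k : ℤ) - j) = ((a j).choose (k - j) : ℤ) :=
    fun j hj => izchoose_natCast_sub _ (by have := mem_range.1 hj; omega)
  rw [hm]
  exact_mod_cast (sum_choose_cascadeElem (by omega)).trans (sum_congr rfl hterm)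

theorem kBinDecomp.exists_initSeg {n k m t : ℕ} {a : ℕ → ℕ} (hdec : kBinDecomp k m t a)
    (hm : m ≤ n.choose k) :
    ∃ s : Finset (Fin n), #s = k ∧ #(Colex.initSeg s) = m ∧
      ∀ i ≤ k, (#(∂^[i] (Colex.initSeg s)) : ℤ) =
        ∑ j ∈ range (t + 1), izchoose (a j) ((k : ℤ) - i - j) := by
  have hsum := hdec.sum_choose_cascadeElem_add_one
  obtain ⟨htk, ha, hat, -⟩ := hdec
  set g := cascadeElem a t
  have hg0 : g 0 < n := by
    by_contra! h
    have hle : (g 0).choose k ≤ ∑ j ∈ range k, (g j).choose (k - j) :=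
      single_le_sum (f := fun j => (g j).choose (k - j)) (by simp) (by simp; omega)
    have := Nat.choose_le_choose k h
    omega
  let G : ℕ → Fin n := fun j =>
    ⟨g j, (cascadeElem_antitone ha (Nat.zero_le j)).trans_lt hg0⟩
  have hG : StrictAntiOn G (Set.Iio k) := cascadeElem_strictAntiOn ha hat
  have hcard : ∀ r ≤ k,
      #(Colex.initSeg ((range r).image G)) = ∑ j ∈ range r, (g j).choose (r - j) + 1 := by
    intro r hr
    rw [Colex.card_initSeg_image_range (hG.mono (Set.Iio_subset_Iio hr))]
    simp [G]
  refine ⟨(range k).image G, ?_, ?_, fun i hi => ?_⟩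
  · rw [card_image_of_injOn (hG.injOn.mono (by simp)), card_range]
  · rw [hcard k le_rfl, hsum]
  · have hki : k - i + i = k := by omega
    have hshadow := Colex.iterate_shadow_initSeg_image_range (r := k - i) (hki ▸ hG)
    rw [hki] at hshadow
    rw [hshadow, hcard (k - i) (by omega), sum_choose_cascadeElem (by omega),
      Nat.cast_sub (by omega)]

theorem stmt2_general (n k t : ℕ) (a : ℕ → ℕ) (S : Finset (Finset (Fin n)))
    (hS : ∀ s ∈ S, s.card = k)
    (hdec : kBinDecomp k S.card t a) :
    ∀ i, i ≤ k - 1 →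
      ∑ j ∈ Finset.range (t + 1), izchoose (a j) ((k : ℤ) - i - j)
        ≤ ((Finset.shadow^[i] S).card : ℤ) := by
  intro i hi
  obtain ⟨C, hCk, hCS, hCshadow⟩ := hdec.exists_initSeg (by simpa using Set.Sized.card_le hS)
  rw [← hCshadow i (by omega)]
  exact_mod_cast iterated_kk hS hCS.le (hCk ▸ Colex.isInitSeg_initSeg)

/-- Kruskal–Katona theorem for iterated shadows. -/
theorem stmt2 (n k t : ℕ) (a : ℕ → ℕ) (S : Finset (Finset (Fin n)))
    (hk : 0 < k) (hS : ∀ s ∈ S, s.card = k) (hne : S.Nonempty)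
    (hdec : kBinDecomp k S.card t a) :
    ∀ i, i ≤ k - 1 →
      ∑ j ∈ Finset.range (t + 1), izchoose (a j) ((k : ℤ) - i - j)
        ≤ ((Finset.shadow^[i] S).card : ℤ) :=
  stmt2_general n k t a S hS hdec
end

section
/- The lower shadow of the initial segment of length m in the colexicographic order on k-subsets of [n] is again an initial segment in the colexicographic order on (k-1)-subsets. Consequently, if m = C(a_0,k)+...+C(a_t,k-t) is the k-binomial decomposition, then |∂ I_{n,k}(m)| = C(a_0,k-1)+...+C(a_t,k-t-1). -/
open Finset

/-!
Initial segments of `k`-sets are nested, so comparing sizes shows that an initial segment `S`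
with `C(c, k) < |S| < C(c + 1, k)` contains every `k`-subset of `{0, …, c - 1}` and lies inside
the `k`-subsets of `{0, …, c}`. Splitting at `e = c`, the sets avoiding `e` are then exactly the
`k`-subsets of `{0, …, c - 1}`, and the link `{s | e ∉ s, s ∪ {e} ∈ S}` is an initial segment of
`(k - 1)`-sets of size `|S| - C(c, k)`. Since taking links commutes with the shadow, `∂S` splits
the same way into all `(k - 1)`-subsets of `{0, …, c - 1}` and the shadow of the link. Peeling
off the leading term `C(a 0, k)` of the cascade thus reduces `(k, t)` to `(k - 1, t - 1)`; at
`t = 0` the segment is the full `k`-th slice of a lower set.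
-/

open scoped FinsetFamily
open Finset.Colex

lemma Nat.choose_lt_choose_of_lt {a b k : ℕ} (hk : 0 < k) (hkb : k ≤ b) (hab : a < b) :
    a.choose k < b.choose k := by
  obtain ⟨b, rfl⟩ : ∃ b', b = b' + 1 := ⟨b - 1, by omega⟩
  have hpos := Nat.choose_pos (show k - 1 ≤ b by omega)
  have hmono := Nat.choose_le_choose k (show a ≤ b by omega)
  rw [Nat.choose_succ_left _ _ hk]
  omega

namespace Finset

section DecidableEq

variable {α : Type*} [DecidableEq α]

lemma memberSubfamily_shadow (a : α) (𝒜 : Finset (Finset α)) :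
    (∂ 𝒜).memberSubfamily a = ∂ (𝒜.memberSubfamily a) := by
  ext s
  simp only [mem_memberSubfamily, mem_shadow_iff_insert_mem, mem_insert, not_or]
  constructor
  · rintro ⟨⟨x, ⟨hxa, hxs⟩, hx⟩, has⟩
    exact ⟨x, hxs, by rwa [insert_comm], Ne.symm hxa, has⟩
  · rintro ⟨x, hxs, hx, hax, has⟩
    exact ⟨⟨x, ⟨Ne.symm hax, hxs⟩, by rwa [insert_comm]⟩, has⟩

lemma shadow_powersetCard {s : Finset α} {k : ℕ} (hk : 0 < k) (hks : k ≤ #s) :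
    ∂ (powersetCard k s) = powersetCard (k - 1) s := by
  ext t
  simp only [mem_shadow_iff_insert_mem, mem_powersetCard]
  constructor
  · rintro ⟨a, hat, hts, hcard⟩
    rw [card_insert_of_notMem hat] at hcard
    exact ⟨(subset_insert a t).trans hts, by omega⟩
  · rintro ⟨hts, hcard⟩
    obtain ⟨a, has, hat⟩ := exists_mem_notMem_of_card_lt_card (s := t) (t := s) (by omega)
    exact ⟨a, hat, insert_subset has hts, by rw [card_insert_of_notMem hat]; omega⟩

end DecidableEq

namespace Colex

variable {α : Type*} [LinearOrder α] {𝒜 ℬ : Finset (Finset α)} {r : ℕ}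

lemma IsInitSeg.subset_of_card_le (h𝒜 : IsInitSeg 𝒜 r) (hℬ : IsInitSeg ℬ r) (h : #𝒜 ≤ #ℬ) :
    𝒜 ⊆ ℬ :=
  (h𝒜.total hℬ).elim id fun hℬ𝒜 => (eq_of_subset_of_card_le hℬ𝒜 h).superset

lemma isInitSeg_powersetCard {s : Finset α} (hs : IsLowerSet (s : Set α)) (r : ℕ) :
    IsInitSeg (powersetCard r s) r := by
  refine ⟨fun u hu => (mem_powersetCard.1 hu).2, fun u t hu ⟨htu, ht⟩ => ?_⟩
  refine mem_powersetCard.2 ⟨fun x hxt => ?_, ht⟩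
  have hus := (mem_powersetCard.1 hu).1
  by_cases hxu : x ∈ u
  · exact hus hxu
  obtain ⟨y, hyu, -, hxy⟩ := toColex_le_toColex.1 htu.le hxt hxu
  exact hs hxy (hus hyu)

variable [LocallyFiniteOrderBot α] {e : α}

lemma nonMemberSubfamily_eq_powersetCard_Iio (h₁ : powersetCard r (Iio e) ⊆ 𝒜)
    (h₂ : 𝒜 ⊆ powersetCard r (Iic e)) : 𝒜.nonMemberSubfamily e = powersetCard r (Iio e) := by
  ext s
  rw [mem_nonMemberSubfamily]
  constructor
  · rintro ⟨hs, hes⟩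
    obtain ⟨hse, hcard⟩ := mem_powersetCard.1 (h₂ hs)
    refine mem_powersetCard.2 ⟨fun x hx => mem_Iio.2 ?_, hcard⟩
    exact (mem_Iic.1 (hse hx)).lt_of_ne (ne_of_mem_of_not_mem hx hes)
  · intro hs
    exact ⟨h₁ hs, fun he => lt_irrefl e (mem_Iio.1 ((mem_powersetCard.1 hs).1 he))⟩

lemma IsInitSeg.memberSubfamily (h𝒜 : IsInitSeg 𝒜 r) (h₂ : 𝒜 ⊆ powersetCard r (Iic e)) :
    IsInitSeg (𝒜.memberSubfamily e) (r - 1) := by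
  have hmem : ∀ {s}, s ∈ 𝒜.memberSubfamily e → insert e s ∈ 𝒜 ∧ e ∉ s ∧ #s + 1 = r :=
    fun hs => by
      obtain ⟨hs, hes⟩ := mem_memberSubfamily.1 hs
      exact ⟨hs, hes, card_insert_of_notMem hes ▸ h𝒜.1 hs⟩
  refine ⟨fun s hs => by have := (hmem hs).2.2; omega, fun s t hs ⟨hts, ht⟩ => ?_⟩
  obtain ⟨hs, hes, hcard⟩ := hmem hs
  have hse : ∀ x ∈ s, x < e := fun x hx =>
    (mem_Iic.1 ((mem_powersetCard.1 (h₂ hs)).1 (mem_insert_of_mem hx))).lt_of_ne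
      (ne_of_mem_of_not_mem hx hes)
  have het : e ∉ t := fun he => lt_irrefl e (forall_lt_mono hts.le hse e he)
  have hlt : toColex (insert e t) < toColex (insert e s) := by
    rwa [← toColex_sdiff_lt_toColex_sdiff (singleton_subset_iff.2 (mem_insert_self e t))
      (singleton_subset_iff.2 (mem_insert_self e s)), sdiff_singleton_eq_erase,
      sdiff_singleton_eq_erase, erase_insert het, erase_insert hes]
  exact mem_memberSubfamily.2
    ⟨h𝒜.2 hs ⟨hlt, by rw [card_insert_of_notMem het]; omega⟩, het⟩

end Colex

end Finset

namespace kBinDecomp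

variable {k m t : ℕ} {a : ℕ → ℕ}

lemma pos (h : kBinDecomp k m t a) : 0 < k := by
  have := h.1
  omega

lemma tail (h : kBinDecomp k m (t + 1) a) :
    kBinDecomp (k - 1) (m - (a 0).choose k) t (fun i => a (i + 1)) ∧ (a 0).choose k < m := by
  obtain ⟨htk, hdec, hlast, rfl⟩ := h
  have hsum : ∑ i ∈ range (t + 1), (a (i + 1)).choose (k - (i + 1)) =
      ∑ i ∈ range (t + 1), (a (i + 1)).choose (k - 1 - i) :=
    sum_congr rfl fun i _ => by rw [Nat.sub_sub, Nat.add_comm 1 i]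
  have hpos : 0 < ∑ i ∈ range (t + 1), (a (i + 1)).choose (k - (i + 1)) :=
    sum_pos' (fun _ _ => Nat.zero_le _) ⟨t, self_mem_range_succ t, Nat.choose_pos hlast⟩
  rw [sum_range_succ', Nat.sub_zero, Nat.add_sub_cancel]
  refine ⟨⟨by omega, fun i hi => hdec (i + 1) (by omega), ?_, hsum⟩, by omega⟩
  show k - 1 - t ≤ a (t + 1)
  omega

lemma le_head (h : kBinDecomp k m t a) : k ≤ a 0 := by
  induction t generalizing k m a with
  | zero => simpa using h.2.2.1
  | succ t ih =>
    have := ih h.tail.1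
    have := h.2.1 0 (Nat.succ_pos t)
    omega

lemma lt_choose_head_succ (h : kBinDecomp k m t a) : m < (a 0 + 1).choose k := by
  induction t generalizing k m a with
  | zero =>
    rw [h.2.2.2, sum_range_one, Nat.sub_zero]
    exact Nat.choose_lt_choose_of_lt h.pos (by have := h.le_head; omega) (Nat.lt_succ_self _)
  | succ t ih =>
    obtain ⟨htail, hlt⟩ := h.tail
    have hrest : m - (a 0).choose k < (a 1 + 1).choose (k - 1) := ih htail
    have hmono : (a 1 + 1).choose (k - 1) ≤ (a 0).choose (k - 1) :=
      Nat.choose_le_choose _ (h.2.1 0 (Nat.succ_pos t))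
    rw [Nat.choose_succ_left _ _ h.pos]
    omega

end kBinDecomp

lemma Fin.exists_isLowerSet_card_eq {n c : ℕ} (hc : c ≤ n) :
    ∃ s : Finset (Fin n), IsLowerSet (s : Set (Fin n)) ∧ #s = c := by
  obtain hc | rfl := hc.lt_or_eq
  · exact ⟨Iio ⟨c, hc⟩, by simpa using isLowerSet_Iio _, Fin.card_Iio _⟩
  · exact ⟨univ, by simpa using isLowerSet_univ, card_fin _⟩

section Fin

variable {n k c : ℕ} {S : Finset (Finset (Fin n))}

lemma card_shadow_of_card_eq_choose (hS : IsInitSeg S k) (hk : 0 < k) (hkc : k ≤ c)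
    (hcard : #S = c.choose k) : #(∂ S) = c.choose (k - 1) := by
  have hcn : c ≤ n := by
    by_contra! hnc
    have := hS.1.card_le
    rw [Fintype.card_fin] at this
    have := Nat.choose_lt_choose_of_lt hk hkc hnc
    omega
  obtain ⟨s, hs, rfl⟩ := Fin.exists_isLowerSet_card_eq hcn
  have hP := isInitSeg_powersetCard hs k
  have hSP : S = powersetCard k s := subset_antisymm
    (hS.subset_of_card_le hP (by rw [card_powersetCard, hcard]))
    (hP.subset_of_card_le hS (by rw [card_powersetCard, hcard]))
  rw [hSP, shadow_powersetCard hk hkc, card_powersetCard]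

lemma exists_card_shadow_eq_choose_add (hS : IsInitSeg S k) (hk : 0 < k) (hkc : k ≤ c)
    (hlo : c.choose k < #S) (hhi : #S < (c + 1).choose k) :
    ∃ S' : Finset (Finset (Fin n)), IsInitSeg S' (k - 1) ∧ #S = c.choose k + #S' ∧
      #(∂ S) = c.choose (k - 1) + #(∂ S') := by
  have hcn : c < n := by
    by_contra! hnc
    have := hS.1.card_le
    rw [Fintype.card_fin] at this
    have := Nat.choose_le_choose k hnc
    omega
  set e : Fin n := ⟨c, hcn⟩
  have hIio : #(Iio e) = c := Fin.card_Iio e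
  have hIic : #(Iic e) = c + 1 := Fin.card_Iic e
  have h₁ : powersetCard k (Iio e) ⊆ S :=
    (isInitSeg_powersetCard (by simpa using isLowerSet_Iio e) k).subset_of_card_le hS
      (by rw [card_powersetCard, hIio]; omega)
  have h₂ : S ⊆ powersetCard k (Iic e) :=
    hS.subset_of_card_le (isInitSeg_powersetCard (by simpa using isLowerSet_Iic e) k)
      (by rw [card_powersetCard, hIic]; omega)
  refine ⟨S.memberSubfamily e, hS.memberSubfamily h₂, ?_, ?_⟩
  · rw [← card_memberSubfamily_add_card_nonMemberSubfamily e S,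
      nonMemberSubfamily_eq_powersetCard_Iio h₁ h₂, card_powersetCard, hIio, add_comm]
  · rw [← memberSubfamily_shadow, ← card_memberSubfamily_add_card_nonMemberSubfamily e (∂ S),
      nonMemberSubfamily_eq_powersetCard_Iio (r := k - 1), card_powersetCard, hIio, add_comm]
    · rw [← shadow_powersetCard hk (by omega)]
      exact shadow_mono h₁
    · rw [← shadow_powersetCard hk (by omega)]
      exact shadow_mono h₂

theorem card_shadow_of_kBinDecomp {t : ℕ} {a : ℕ → ℕ} (hS : IsInitSeg S k)
    (hdec : kBinDecomp k #S t a) :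
    #(∂ S) = ∑ i ∈ range (t + 1), (a i).choose (k - 1 - i) := by
  induction t generalizing k S a with
  | zero =>
    rw [sum_range_one, Nat.sub_zero]
    exact card_shadow_of_card_eq_choose hS hdec.pos hdec.le_head
      (by rw [hdec.2.2.2, sum_range_one, Nat.sub_zero])
  | succ t ih =>
    obtain ⟨htail, hlo⟩ := hdec.tail
    obtain ⟨S', hS', hcard, hshadow⟩ :=
      exists_card_shadow_eq_choose_add hS hdec.pos hdec.le_head hlo hdec.lt_choose_head_succ
    rw [hcard, Nat.add_sub_cancel_left] at htail
    rw [hshadow, ih hS' htail, sum_range_succ' _ (t + 1), Nat.sub_zero, add_comm]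
    exact congrArg (· + _) (sum_congr rfl fun i _ => by rw [Nat.sub_sub, Nat.add_comm 1 i])

end Fin

lemma isInitColex_iff_isInitSeg {n k : ℕ} {S : Finset (Finset (Fin n))} :
    IsInitColex n k S ↔ IsInitSeg S k :=
  ⟨fun h => ⟨fun _ hs => h.1 _ hs, fun _ _ hs ht => h.2 _ hs _ ht.2 ht.1⟩,
    fun h => ⟨fun _ hs => h.1 hs, fun _ hs _ ht hts => h.2 hs ⟨hts, ht⟩⟩⟩

theorem stmt5_general (n k t m : ℕ) (a : ℕ → ℕ) (S : Finset (Finset (Fin n)))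
    (hS : IsInitColex n k S) (hcard : S.card = m)
    (hdec : kBinDecomp k m t a) :
    IsInitColex n (k - 1) (Finset.shadow S) ∧
      (Finset.shadow S).card = ∑ i ∈ Finset.range (t + 1), (a i).choose (k - 1 - i) := by
  subst hcard
  have hS' := isInitColex_iff_isInitSeg.1 hS
  exact ⟨isInitColex_iff_isInitSeg.2 hS'.shadow, card_shadow_of_kBinDecomp hS' hdec⟩

/-- The shadow of an initial colex segment is an initial colex segment, and its
cardinality is given by the Kruskal–Katona bound. -/
theorem stmt5 (n k t m : ℕ) (a : ℕ → ℕ) (S : Finset (Finset (Fin n)))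
    (hk : 0 < k) (hS : IsInitColex n k S) (hcard : S.card = m)
    (hdec : kBinDecomp k m t a) :
    IsInitColex n (k - 1) (Finset.shadow S) ∧
      (Finset.shadow S).card = ∑ i ∈ Finset.range (t + 1), (a i).choose (k - 1 - i) :=
  stmt5_general n k t m a S hS hcard hdec
end

section
/- Let n ≥ k > 0 and 0 < m ≤ C(n,k) with k-binomial decomposition of length exactly k, say m = C(a_0,k)+...+C(a_{k-1},1), and suppose a_{k-1} < a_0 - k + 1. Then there exists a family S of k-subsets (of some ground set) with |S| = m that achieves equality in the Kruskal–Katona bound and is not isomorphic to the initial segment of length m in the colex order. -/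
open Finset

/-!
Inside the ground set `{0, …, a 0}` write `pre l = {a 0, …, a (l - 1)}`. The colex initial
segment of size `m` is the disjoint union over `l < k` of the blocks of sets `pre l ∪ B`, with
`B` a `(k - l)`-subset of `{0, …, a l - 1}`, and its shadow is the same union taken with
`(k - 1 - l)`-subsets. Let `j` be the first index with `a (j + 1) + 2 ≤ a j`, so that
`a l = a 0 - l` for `l ≤ j`. Swap the member `removed = {0, …, k - j - 1} ∪ pre j` of the
segment for `pre k`: the size is kept, every facet of `pre k` lies in the shadow already, and
every facet of `removed` has a second extension in block `j` because `k - j < a j`. So the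
shadow does not change.

A relabelling of the ground set carries the set of points lying in every `k`-set outside a
family along with it. For an initial segment of size `m` that set contains `a 0, …, a j`: all
`k`-sets colex-before a set missing `a l` (`l ≤ j`) lie in the first `l + 1` blocks, which have
fewer than `m` members. For the new family it lies inside `pre j`, since `removed` is missing,
and so is `pre (j + 1)` together with `a (j + 1) + 1` and enough points below `a (j + 1)` to
avoid any given point of `removed \ pre j`.
-/

def missingCore {α : Type*} [Fintype α] [DecidableEq α] (k : ℕ) (𝒜 : Finset (Finset α)) :
    Finset α :=
  {v | ∀ s : Finset α, #s = k → s ∉ 𝒜 → v ∈ s}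

lemma missingCore_image_perm {α : Type*} [Fintype α] [DecidableEq α] (k : ℕ)
    (𝒜 : Finset (Finset α)) (σ : Equiv.Perm α) :
    missingCore k (𝒜.image (image σ)) = (missingCore k 𝒜).map σ.toEmbedding := by
  ext v
  simp only [missingCore, mem_map_equiv, mem_filter, mem_univ, true_and]
  constructor
  · intro h s hs hs𝒜
    have := h (s.image σ) (by rw [card_image_of_injective _ σ.injective, hs])
      (by rwa [(image_injective σ.injective).mem_finset_image])
    simpa [← Equiv.Perm.eq_inv_iff_eq] using this
  · intro h s hs hs𝒜
    have := h (s.image σ.symm) (by rw [card_image_of_injective _ σ.symm.injective, hs])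
      (fun hmem => hs𝒜 (mem_image.2 ⟨_, hmem, by simp [image_image]⟩))
    simpa using this

lemma add_sub_le_of_forall_succ_lt {a : ℕ → ℕ} {t : ℕ} (h : ∀ i, i < t → a (i + 1) < a i)
    {i l : ℕ} (hil : i ≤ l) (hlt : l ≤ t) : a l + (l - i) ≤ a i := by
  induction l, hil using Nat.le_induction with
  | base => simp
  | succ l hil ih =>
    have := h l (by omega)
    have := ih (by omega)
    omega

lemma kBinDecomp.sub_le {k m t : ℕ} {a : ℕ → ℕ} (h : kBinDecomp k m t a) {i : ℕ} (hi : i ≤ t) :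
    k - i ≤ a i := by
  have := add_sub_le_of_forall_succ_lt h.2.1 hi le_rfl
  have := h.2.2.1
  omega

lemma add_eq_of_forall_lt_succ_add_two {a : ℕ → ℕ} {t : ℕ} (h : ∀ i, i < t → a (i + 1) < a i)
    {l : ℕ} (hlt : l ≤ t) (hunit : ∀ i, i < l → a i < a (i + 1) + 2) : a l + l = a 0 := by
  induction l with
  | zero => rfl
  | succ l ih =>
    have := h l (by omega)
    have := hunit l (by omega)
    have := ih (by omega) (fun i hi => hunit i (by omega))
    omega

lemma exists_first_gap {a : ℕ → ℕ} {t : ℕ} (h : ∀ i, i < t → a (i + 1) < a i)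
    (hgap : a t + t < a 0) : ∃ j < t, a (j + 1) + 2 ≤ a j ∧ ∀ i ≤ j, a i + i = a 0 := by
  have hex : ∃ j, j < t ∧ a (j + 1) + 2 ≤ a j := by
    by_contra! hunit
    have := add_eq_of_forall_lt_succ_add_two h le_rfl hunit
    omega
  obtain ⟨hjt, hjgap⟩ := Nat.find_spec hex
  refine ⟨Nat.find hex, hjt, hjgap, fun i hi => add_eq_of_forall_lt_succ_add_two h (by omega)
    fun l hl => ?_⟩
  have := Nat.find_min hex (show l < Nat.find hex by omega)
  omega

/-- The coefficients of a `k`-binomial decomposition of length `k`, with `j` the first index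
where they drop by more than one. -/
structure GapCascade where
  k : ℕ
  a : ℕ → ℕ
  j : ℕ
  j_add_two_le : j + 2 ≤ k
  a_succ_lt : ∀ i, i + 1 < k → a (i + 1) < a i
  sub_le_a : ∀ i, i < k → k - i ≤ a i
  a_add_eq : ∀ i, i ≤ j → a i + i = a 0
  gap : a (j + 1) + 2 ≤ a j

namespace GapCascade

variable (C : GapCascade)

lemma a_add_sub_le {i l : ℕ} (hil : i ≤ l) (hl : l < C.k) : C.a l + (l - i) ≤ C.a i :=
  add_sub_le_of_forall_succ_lt (t := C.k - 1) (fun i hi => C.a_succ_lt i (by omega)) hil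
    (by omega)

lemma a_lt_a {i l : ℕ} (hil : i < l) (hl : l < C.k) : C.a l < C.a i := by
  have := C.a_add_sub_le hil.le hl
  omega

lemma a_le_a {i l : ℕ} (hil : i ≤ l) (hl : l < C.k) : C.a l ≤ C.a i := by
  have := C.a_add_sub_le hil hl
  omega

lemma a_le_a_zero {i : ℕ} (hi : i < C.k) : C.a i ≤ C.a 0 := C.a_le_a (Nat.zero_le i) hi

lemma j_succ_lt_k : C.j + 1 < C.k := by
  have := C.j_add_two_le
  omega

lemma sub_j_lt_a_j : C.k - C.j < C.a C.j := by
  have := C.sub_le_a (C.j + 1) C.j_succ_lt_k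
  have := C.gap
  omega

abbrev n : ℕ := C.a 0 + 1

lemma a_lt_n {i : ℕ} (hi : i < C.k) : C.a i < C.n := Nat.lt_succ_of_le (C.a_le_a_zero hi)

/-- The point `x`, clamped to the ground set. -/
def pt (x : ℕ) : Fin C.n := ⟨min x (C.a 0), Nat.lt_succ_of_le (min_le_right _ _)⟩

lemma val_pt {x : ℕ} (hx : x ≤ C.a 0) : (C.pt x).val = x := min_eq_left hx

def vtx (i : ℕ) : Fin C.n := C.pt (C.a i)

lemma val_vtx {i : ℕ} (hi : i < C.k) : (C.vtx i).val = C.a i := C.val_pt (C.a_le_a_zero hi)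

lemma vtx_lt_vtx {i l : ℕ} (hil : i < l) (hl : l < C.k) : C.vtx l < C.vtx i := by
  rw [Fin.lt_def, C.val_vtx hl, C.val_vtx (hil.trans hl)]
  exact C.a_lt_a hil hl

lemma eq_of_vtx_eq {i l : ℕ} (hi : i < C.k) (hl : l < C.k) (h : C.vtx i = C.vtx l) : i = l := by
  rcases lt_trichotomy i l with hil | rfl | hli
  · exact absurd h (C.vtx_lt_vtx hil hl).ne'
  · rfl
  · exact absurd h (C.vtx_lt_vtx hli hi).ne

def Iv (c : ℕ) : Finset (Fin C.n) := {x | x.val < c}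

@[simp] lemma mem_Iv {c : ℕ} {x : Fin C.n} : x ∈ C.Iv c ↔ x.val < c := by simp [Iv]

lemma card_Iv {c : ℕ} (hc : c ≤ C.n) : #(C.Iv c) = c := by
  rw [Iv, Fin.card_filter_val_lt, min_eq_right hc]

def pre (l : ℕ) : Finset (Fin C.n) := (range l).image C.vtx

lemma mem_pre {l : ℕ} {x : Fin C.n} : x ∈ C.pre l ↔ ∃ i < l, C.vtx i = x := by simp [pre]

lemma vtx_mem_pre {i l : ℕ} (hil : i < l) : C.vtx i ∈ C.pre l := C.mem_pre.2 ⟨i, hil, rfl⟩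

lemma pre_succ (l : ℕ) : C.pre (l + 1) = insert (C.vtx l) (C.pre l) := by
  rw [pre, range_add_one, image_insert, pre]

lemma pre_mono {l l' : ℕ} (h : l ≤ l') : C.pre l ⊆ C.pre l' :=
  image_subset_image (range_subset_range.2 h)

lemma card_pre {l : ℕ} (hl : l ≤ C.k) : #(C.pre l) = l := by
  rw [pre, card_image_of_injOn, card_range]
  intro i hi i' hi' h
  exact C.eq_of_vtx_eq (by simp at hi; omega) (by simp at hi'; omega) h

lemma a_lt_val_of_mem_pre {l : ℕ} (hl : l < C.k) {x : Fin C.n} (hx : x ∈ C.pre l) :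
    C.a l < x.val := by
  obtain ⟨i, hil, rfl⟩ := C.mem_pre.1 hx
  rw [C.val_vtx (hil.trans hl)]
  exact C.a_lt_a hil hl

lemma vtx_notMem_pre {l : ℕ} (hl : l < C.k) : C.vtx l ∉ C.pre l := fun h => by
  have := C.a_lt_val_of_mem_pre hl h
  rw [C.val_vtx hl] at this
  exact lt_irrefl _ this

lemma val_lt_of_mem_pre_of_notMem_pre {i l : ℕ} (hi : i ≤ C.k) {x : Fin C.n}
    (hx : x ∈ C.pre i) (hx' : x ∉ C.pre (l + 1)) : x.val < C.a l := by
  obtain ⟨m, hm, rfl⟩ := C.mem_pre.1 hx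
  have hlm : l < m := by
    by_contra! h
    exact hx' (C.vtx_mem_pre (by omega))
  rw [C.val_vtx (by omega)]
  exact C.a_lt_a hlm (by omega)

/-- Up to the gap the vertices are `a 0, a 0 - 1, …`, so everything else lies below them. -/
lemma val_lt_of_notMem_pre_succ {l : ℕ} (hl : l ≤ C.j) {x : Fin C.n}
    (hx : x ∉ C.pre (l + 1)) : x.val < C.a l := by
  by_contra! hle
  have hx0 : x.val ≤ C.a 0 := Nat.lt_succ_iff.1 x.isLt
  have hal := C.a_add_eq l hl
  have hj := C.j_succ_lt_k
  have hi := C.a_add_eq (C.a 0 - x.val) (by omega)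
  refine hx (C.mem_pre.2 ⟨C.a 0 - x.val, by omega, Fin.ext ?_⟩)
  rw [C.val_vtx (by omega)]
  omega

def block (l r : ℕ) : Finset (Finset (Fin C.n)) :=
  ((C.Iv (C.a l)).powersetCard r).image (· ∪ C.pre l)

lemma disjoint_Iv_pre {l : ℕ} (hl : l < C.k) : Disjoint (C.Iv (C.a l)) (C.pre l) :=
  disjoint_left.2 fun _ hx hx' => (C.mem_Iv.1 hx).not_gt (C.a_lt_val_of_mem_pre hl hx')

lemma mem_block {l r : ℕ} (hl : l < C.k) {s : Finset (Fin C.n)} :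
    s ∈ C.block l r ↔
      C.pre l ⊆ s ∧ (∀ x ∈ s, x ∉ C.pre l → x.val < C.a l) ∧ #s = r + l := by
  simp only [block, mem_image, mem_powersetCard]
  constructor
  · rintro ⟨A, ⟨hA, rfl⟩, rfl⟩
    refine ⟨subset_union_right, fun x hx hx' => ?_, ?_⟩
    · exact C.mem_Iv.1 (hA ((mem_union.1 hx).resolve_right hx'))
    · rw [card_union_of_disjoint (disjoint_of_subset_left hA (C.disjoint_Iv_pre hl)),
        C.card_pre hl.le]
  · rintro ⟨hpre, hlt, hcard⟩
    refine ⟨s \ C.pre l, ⟨fun x hx => ?_, ?_⟩, sdiff_union_of_subset hpre⟩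
    · exact C.mem_Iv.2 (hlt x (mem_sdiff.1 hx).1 (mem_sdiff.1 hx).2)
    · rw [card_sdiff_of_subset hpre, hcard, C.card_pre hl.le]
      omega

lemma card_block {l : ℕ} (hl : l < C.k) (r : ℕ) : #(C.block l r) = (C.a l).choose r := by
  rw [block, card_image_of_injOn, card_powersetCard, C.card_Iv (C.a_lt_n hl).le]
  intro A hA A' hA' h
  have hd := C.disjoint_Iv_pre hl
  simp only [mem_coe, mem_powersetCard] at hA hA'
  simpa [union_sdiff_cancel_right (disjoint_of_subset_left hA.1 hd),
    union_sdiff_cancel_right (disjoint_of_subset_left hA'.1 hd)] using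
    congrArg (· \ C.pre l) h

lemma vtx_notMem_of_mem_block {l r : ℕ} (hl : l < C.k) {s : Finset (Fin C.n)}
    (hs : s ∈ C.block l r) : C.vtx l ∉ s := fun h => by
  have := ((C.mem_block hl).1 hs).2.1 _ h (C.vtx_notMem_pre hl)
  rw [C.val_vtx hl] at this
  exact lt_irrefl _ this

lemma disjoint_block {i l r r' : ℕ} (hil : i < l) (hl : l < C.k) :
    Disjoint (C.block i r) (C.block l r') :=
  disjoint_left.2 fun _ hs hs' => C.vtx_notMem_of_mem_block (hil.trans hl) hs
    (((C.mem_block hl).1 hs').1 (C.vtx_mem_pre hil))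

def blocks (l r : ℕ) : Finset (Finset (Fin C.n)) :=
  (range l).biUnion fun i => C.block i (r - i)

lemma mem_blocks {l r : ℕ} {s : Finset (Fin C.n)} :
    s ∈ C.blocks l r ↔ ∃ i < l, s ∈ C.block i (r - i) := by
  simp [blocks]

lemma card_blocks {l : ℕ} (hl : l ≤ C.k) (r : ℕ) :
    #(C.blocks l r) = ∑ i ∈ range l, (C.a i).choose (r - i) := by
  rw [blocks, card_biUnion]
  · exact sum_congr rfl fun i hi => C.card_block (by simp at hi; omega) _
  · intro i hi i' hi' hne
    simp only [coe_range, Set.mem_Iio] at hi hi'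
    rcases hne.lt_or_gt with h | h
    · exact C.disjoint_block h (by omega)
    · exact (C.disjoint_block h (by omega)).symm

lemma card_of_mem_blocks {l r : ℕ} (hl : l ≤ C.k) (hlr : l ≤ r + 1) {s : Finset (Fin C.n)}
    (hs : s ∈ C.blocks l r) : #s = r := by
  obtain ⟨i, hi, hs⟩ := C.mem_blocks.1 hs
  rw [((C.mem_block (by omega)).1 hs).2.2]
  omega

def removed : Finset (Fin C.n) := C.Iv (C.k - C.j) ∪ C.pre C.j

def family : Finset (Finset (Fin C.n)) := insert (C.pre C.k) ((C.blocks C.k C.k).erase C.removed)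

lemma removed_mem_block : C.removed ∈ C.block C.j (C.k - C.j) := by
  have hj := C.j_succ_lt_k
  have hlt := C.sub_j_lt_a_j
  refine (C.mem_block (by omega)).2 ⟨subset_union_right, fun x hx hx' => ?_, ?_⟩
  · exact (C.mem_Iv.1 ((mem_union.1 hx).resolve_right hx')).trans hlt
  · rw [removed, card_union_of_disjoint (disjoint_of_subset_left (fun x hx => C.mem_Iv.2
      ((C.mem_Iv.1 hx).trans hlt)) (C.disjoint_Iv_pre (by omega))),
      C.card_Iv (hlt.trans (C.a_lt_n (by omega))).le,
      C.card_pre (by omega)]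

lemma removed_mem_blocks : C.removed ∈ C.blocks C.k C.k :=
  C.mem_blocks.2 ⟨C.j, by have := C.j_succ_lt_k; omega, C.removed_mem_block⟩

lemma pre_k_notMem_blocks (r : ℕ) : C.pre C.k ∉ C.blocks C.k r := fun h => by
  obtain ⟨i, hi, hs⟩ := C.mem_blocks.1 h
  exact C.vtx_notMem_of_mem_block hi hs (C.vtx_mem_pre hi)

lemma card_family : #C.family = ∑ i ∈ range C.k, (C.a i).choose (C.k - i) := by
  rw [family, card_insert_of_notMem (fun h => C.pre_k_notMem_blocks _ (mem_of_mem_erase h)),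
    card_erase_add_one C.removed_mem_blocks, C.card_blocks le_rfl]

lemma card_of_mem_family {s : Finset (Fin C.n)} (hs : s ∈ C.family) : #s = C.k := by
  rcases mem_insert.1 hs with rfl | hs
  · exact C.card_pre le_rfl
  · exact C.card_of_mem_blocks le_rfl (by omega) (mem_of_mem_erase hs)

lemma erase_vtx_mem_block {l : ℕ} (hl : l < C.k) {s : Finset (Fin C.n)} (hs : #s = C.k)
    (hpre : C.pre (l + 1) ⊆ s) (hlt : ∀ x ∈ s, x ∉ C.pre (l + 1) → x.val < C.a l) :
    s.erase (C.vtx l) ∈ C.block l (C.k - 1 - l) := by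
  rw [C.pre_succ] at hpre hlt
  refine (C.mem_block hl).2 ⟨fun x hx => mem_erase.2 ⟨?_, hpre (mem_insert_of_mem hx)⟩,
    fun x hx hx' => hlt x (mem_of_mem_erase hx) ?_, ?_⟩
  · rintro rfl
    exact C.vtx_notMem_pre hl hx
  · exact fun h => (mem_insert.1 h).elim (ne_of_mem_erase hx) hx'
  · rw [card_erase_of_mem (hpre (mem_insert_self _ _)), hs]
    omega

lemma shadow_family_subset : C.family.shadow ⊆ C.blocks C.k (C.k - 1) := by
  intro t ht
  obtain ⟨s, hs, x, hx, rfl⟩ := mem_shadow_iff.1 ht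
  rcases mem_insert.1 hs with rfl | hs
  · obtain ⟨l, hl, rfl⟩ := C.mem_pre.1 hx
    exact C.mem_blocks.2 ⟨l, hl, C.erase_vtx_mem_block hl (C.card_pre le_rfl)
      (C.pre_mono hl) fun y hy hy' => C.val_lt_of_mem_pre_of_notMem_pre le_rfl hy hy'⟩
  · obtain ⟨i, hi, hs⟩ := C.mem_blocks.1 (mem_of_mem_erase hs)
    obtain ⟨hpre, hlt, hcard⟩ := (C.mem_block hi).1 hs
    by_cases hx' : x ∈ C.pre i
    · obtain ⟨l, hli, rfl⟩ := C.mem_pre.1 hx'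
      refine C.mem_blocks.2 ⟨l, by omega, C.erase_vtx_mem_block (by omega) (by omega)
        ((C.pre_mono hli).trans hpre) fun y hy hy' => ?_⟩
      by_cases hyi : y ∈ C.pre i
      · exact C.val_lt_of_mem_pre_of_notMem_pre hi.le hyi hy'
      · exact (hlt y hy hyi).trans (C.a_lt_a hli hi)
    · refine C.mem_blocks.2 ⟨i, hi, (C.mem_block hi).2 ⟨fun y hy => mem_erase.2
        ⟨fun h => hx' (h ▸ hy), hpre hy⟩, fun y hy hy' => hlt y (mem_of_mem_erase hy) hy', ?_⟩⟩
      rw [card_erase_of_mem hx, hcard]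
      omega

lemma insert_mem_block {i : ℕ} (hi : i < C.k) {t : Finset (Fin C.n)}
    (ht : t ∈ C.block i (C.k - 1 - i)) {x : Fin C.n} (hx : x ∈ C.Iv (C.a i) \ t) :
    insert x t ∈ C.block i (C.k - i) := by
  obtain ⟨hpre, hlt, hcard⟩ := (C.mem_block hi).1 ht
  refine (C.mem_block hi).2 ⟨hpre.trans (subset_insert _ _), fun y hy hy' => ?_, ?_⟩
  · rcases mem_insert.1 hy with rfl | hy
    · exact C.mem_Iv.1 (mem_sdiff.1 hx).1
    · exact hlt y hy hy'
  · rw [card_insert_of_notMem (mem_sdiff.1 hx).2, hcard]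
    omega

lemma eq_of_mem_block_of_mem_block {i l r r' : ℕ} (hi : i < C.k) (hl : l < C.k)
    {s : Finset (Fin C.n)} (hsi : s ∈ C.block i r) (hsl : s ∈ C.block l r') : i = l := by
  rcases lt_trichotomy i l with h | h | h
  · exact absurd hsl (disjoint_left.1 (C.disjoint_block h hl) hsi)
  · exact h
  · exact absurd hsi (disjoint_left.1 (C.disjoint_block h hi) hsl)

lemma sub_le_card_Iv_sdiff {i r : ℕ} (hi : i < C.k) {t : Finset (Fin C.n)}
    (ht : t ∈ C.block i r) : C.a i - r ≤ #(C.Iv (C.a i) \ t) := by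
  obtain ⟨hpre, -, hcard⟩ := (C.mem_block hi).1 ht
  have hsub : C.Iv (C.a i) \ (t \ C.pre i) ⊆ C.Iv (C.a i) \ t := fun x hx => by
    obtain ⟨hxI, hxt⟩ := mem_sdiff.1 hx
    exact mem_sdiff.2 ⟨hxI, fun h => hxt (mem_sdiff.2
      ⟨h, disjoint_left.1 (C.disjoint_Iv_pre hi) hxI⟩)⟩
  have := le_card_sdiff (t \ C.pre i) (C.Iv (C.a i))
  rw [card_sdiff_of_subset hpre, hcard, C.card_pre hi.le, C.card_Iv (C.a_lt_n hi).le] at this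
  have := card_le_card hsub
  omega

lemma mem_shadow_family_of_insert {i : ℕ} (hi : i < C.k) {t : Finset (Fin C.n)}
    (ht : t ∈ C.block i (C.k - 1 - i)) {x : Fin C.n} (hx : x ∈ C.Iv (C.a i) \ t)
    (hne : insert x t ≠ C.removed) : t ∈ C.family.shadow :=
  mem_shadow_iff_insert_mem.2 ⟨x, (mem_sdiff.1 hx).2, mem_insert_of_mem (mem_erase.2
    ⟨hne, C.mem_blocks.2 ⟨i, hi, C.insert_mem_block hi ht hx⟩⟩)⟩

/-- Adding a free point of its block to `t` gives a member of the initial segment; if that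
member is `removed`, the block is block `j`, which has a second free point since
`k - j < a j`. -/
lemma blocks_subset_shadow_family : C.blocks C.k (C.k - 1) ⊆ C.family.shadow := by
  intro t ht
  obtain ⟨i, hi, ht⟩ := C.mem_blocks.1 ht
  have hX := C.sub_le_card_Iv_sdiff hi ht
  by_cases h : ∃ x ∈ C.Iv (C.a i) \ t, insert x t = C.removed
  · obtain ⟨x, hx, hxt⟩ := h
    have hij : i = C.j := C.eq_of_mem_block_of_mem_block hi (by have := C.j_succ_lt_k; omega)
      (C.insert_mem_block hi ht hx) (hxt ▸ C.removed_mem_block)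
    subst hij
    obtain ⟨y, hy, hyx⟩ :=
      exists_mem_ne (s := C.Iv (C.a C.j) \ t) (by have := C.sub_j_lt_a_j; omega) x
    refine C.mem_shadow_family_of_insert hi ht hy fun hyt => ?_
    have : y ∈ insert x t := hxt ▸ hyt ▸ mem_insert_self y t
    exact (mem_sdiff.1 hy).2 ((mem_insert.1 this).resolve_left hyx)
  · push Not at h
    obtain ⟨x, hx⟩ := card_pos.1 (by have := C.sub_le_a i hi; omega : 0 < #(C.Iv (C.a i) \ t))
    exact C.mem_shadow_family_of_insert hi ht hx (h x hx)

lemma shadow_family : C.family.shadow = C.blocks C.k (C.k - 1) :=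
  C.shadow_family_subset.antisymm C.blocks_subset_shadow_family

lemma card_shadow_family : #(C.family.shadow) = ∑ i ∈ range C.k, (C.a i).choose (C.k - 1 - i) := by
  rw [C.shadow_family, C.card_blocks le_rfl]

lemma exists_first_vtx_notMem {m : ℕ} {s : Finset (Fin C.n)} (h : ¬ C.pre m ⊆ s) :
    ∃ l < m, C.pre l ⊆ s ∧ C.vtx l ∉ s := by
  obtain ⟨x, hx, hxs⟩ := not_subset.1 h
  obtain ⟨i, hi, rfl⟩ := C.mem_pre.1 hx
  have hex : ∃ l, C.vtx l ∉ s := ⟨i, hxs⟩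
  refine ⟨Nat.find hex, (Nat.find_min' hex hxs).trans_lt hi, fun y hy => ?_, Nat.find_spec hex⟩
  obtain ⟨l, hl, rfl⟩ := C.mem_pre.1 hy
  exact not_not.1 (Nat.find_min hex hl)

lemma mem_block_of_pre_subset {l : ℕ} (hl : l ≤ C.j) {s : Finset (Fin C.n)} (hs : #s = C.k)
    (hpre : C.pre l ⊆ s) (hvl : C.vtx l ∉ s) : s ∈ C.block l (C.k - l) := by
  have := C.j_succ_lt_k
  refine (C.mem_block (by omega)).2 ⟨hpre, fun x hx hx' => C.val_lt_of_notMem_pre_succ hl ?_,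
    by omega⟩
  rw [C.pre_succ]
  exact fun h => (mem_insert.1 h).elim (fun h => hvl (h ▸ hx)) hx'

/-- Below the gap, a set through `a 0, …, a l` comes after any set missing `a l` in colex,
as all other points lie below `a l`. -/
lemma mem_blocks_of_toColex_lt {l : ℕ} (hl : l ≤ C.j) {s t : Finset (Fin C.n)}
    (hvl : C.vtx l ∉ s) (ht : #t = C.k) (hts : toColex t < toColex s) :
    t ∈ C.blocks (l + 1) C.k := by
  have hmiss : ¬ C.pre (l + 1) ⊆ t := fun hsub => hts.not_gt <| by
    rw [Colex.toColex_lt_toColex_iff_exists_forall_lt]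
    refine ⟨C.vtx l, hsub (C.vtx_mem_pre (lt_add_one l)), hvl, fun x _ hxt => ?_⟩
    rw [Fin.lt_def, C.val_vtx (by have := C.j_succ_lt_k; omega)]
    exact C.val_lt_of_notMem_pre_succ hl fun h => hxt (hsub h)
  obtain ⟨i, hi, hpre', hvi⟩ := C.exists_first_vtx_notMem hmiss
  exact C.mem_blocks.2 ⟨i, hi, C.mem_block_of_pre_subset (by omega) ht hpre' hvi⟩

lemma sum_choose_lt {l : ℕ} (hl : l ≤ C.j) :
    ∑ i ∈ range (l + 1), (C.a i).choose (C.k - i) <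
      ∑ i ∈ range C.k, (C.a i).choose (C.k - i) := by
  have := C.j_succ_lt_k
  exact sum_lt_sum_of_subset (range_subset_range.2 (by omega)) (i := l + 1)
    (mem_range.2 (by omega)) (by simp) (Nat.choose_pos (C.sub_le_a _ (by omega)))
    fun _ _ _ => Nat.zero_le _

lemma pre_subset_missingCore {A : Finset (Finset (Fin C.n))} (hA : IsInitColex C.n C.k A)
    (hcard : #A = ∑ i ∈ range C.k, (C.a i).choose (C.k - i)) :
    C.pre (C.j + 1) ⊆ missingCore C.k A := by
  intro v hv
  obtain ⟨l, hl, rfl⟩ := C.mem_pre.1 hv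
  simp only [missingCore, mem_filter, mem_univ, true_and]
  intro s hs hsA
  by_contra hvl
  have hAsub : A ⊆ C.blocks (l + 1) C.k := fun t ht =>
    C.mem_blocks_of_toColex_lt (by omega) hvl (hA.1 t ht) <|
      lt_of_le_of_ne (not_lt.1 fun hst => hsA (hA.2 t ht s hs hst))
        fun h => hsA (toColex_inj.1 h ▸ ht)
  have := card_le_card hAsub
  rw [hcard, C.card_blocks (by have := C.j_succ_lt_k; omega)] at this
  exact (C.sum_choose_lt (by omega)).not_ge this

def gapPt : Fin C.n := C.pt (C.a (C.j + 1) + 1)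

lemma val_gapPt : C.gapPt.val = C.a (C.j + 1) + 1 := by
  have := C.gap
  have := C.a_le_a_zero (i := C.j) (by have := C.j_succ_lt_k; omega)
  exact C.val_pt (by omega)

lemma gapPt_notMem_pre {l : ℕ} (hl : l ≤ C.k) : C.gapPt ∉ C.pre l := fun h => by
  obtain ⟨i, hi, hx⟩ := C.mem_pre.1 h
  have hval := congrArg Fin.val hx
  rw [C.val_vtx (by omega), C.val_gapPt] at hval
  have := C.gap
  rcases Nat.lt_or_ge C.j i with hji | hij
  · have := C.a_le_a (show C.j + 1 ≤ i by omega) (by omega : i < C.k)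
    omega
  · have := C.a_le_a hij (by have := C.j_succ_lt_k; omega)
    omega

lemma notMem_blocks_of_gapPt_mem {s : Finset (Fin C.n)} (hpre : C.pre (C.j + 1) ⊆ s)
    (hp : C.gapPt ∈ s) (r : ℕ) : s ∉ C.blocks C.k r := fun h => by
  obtain ⟨i, hi, hs⟩ := C.mem_blocks.1 h
  rcases Nat.lt_or_ge C.j i with hji | hij
  · have := ((C.mem_block hi).1 hs).2.1 _ hp (C.gapPt_notMem_pre hi.le)
    rw [C.val_gapPt] at this
    have := C.a_le_a (show C.j + 1 ≤ i by omega) hi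
    omega
  · exact C.vtx_notMem_of_mem_block hi hs (hpre (C.vtx_mem_pre (by omega)))

lemma exists_notMem_family_of_val_lt {v : Fin C.n} (hv : v.val < C.k - C.j) :
    ∃ s, #s = C.k ∧ s ∉ C.family ∧ v ∉ s := by
  have hj := C.j_succ_lt_k
  have hd := C.sub_le_a (C.j + 1) hj
  obtain ⟨P, hPsub, hPcard⟩ := exists_subset_card_eq (s := (C.Iv (C.a (C.j + 1))).erase v)
    (n := C.k - C.j - 2) (by
      have := pred_card_le_card_erase (s := C.Iv (C.a (C.j + 1))) (a := v)
      rw [C.card_Iv (C.a_lt_n hj).le] at this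
      omega)
  have hPlt : ∀ x ∈ P, x.val < C.a (C.j + 1) := fun x hx => C.mem_Iv.1 (mem_of_mem_erase (hPsub hx))
  have hpP : C.gapPt ∉ P := fun h => by
    have := hPlt _ h
    rw [C.val_gapPt] at this
    omega
  have hdisj : Disjoint (insert C.gapPt P) (C.pre (C.j + 1)) := disjoint_left.2 fun x hx hx' => by
    rcases mem_insert.1 hx with rfl | hx
    · exact C.gapPt_notMem_pre (by omega) hx'
    · exact (hPlt x hx).not_gt (C.a_lt_val_of_mem_pre hj hx')
  refine ⟨insert C.gapPt P ∪ C.pre (C.j + 1), ?_, fun h => ?_, fun h => ?_⟩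
  · rw [card_union_of_disjoint hdisj, card_insert_of_notMem hpP, hPcard, C.card_pre (by omega)]
    omega
  · have hp : C.gapPt ∈ insert C.gapPt P ∪ C.pre (C.j + 1) := mem_union_left _ (mem_insert_self _ _)
    rcases mem_insert.1 h with h | h
    · exact C.gapPt_notMem_pre le_rfl (h ▸ hp)
    · exact C.notMem_blocks_of_gapPt_mem subset_union_right hp _ (mem_of_mem_erase h)
  · rcases mem_union.1 h with h | h
    · rcases mem_insert.1 h with rfl | h
      · rw [C.val_gapPt] at hv
        omega
      · exact (mem_erase.1 (hPsub h)).1 rfl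
    · have := C.a_lt_val_of_mem_pre hj h
      omega

lemma removed_notMem_family : C.removed ∉ C.family := fun h => by
  rcases mem_insert.1 h with h | h
  · have hj := C.j_succ_lt_k
    exact C.vtx_notMem_of_mem_block (by omega) C.removed_mem_block
      (h ▸ C.vtx_mem_pre (by omega))
  · exact notMem_erase _ _ h

lemma missingCore_family_subset : missingCore C.k C.family ⊆ C.pre C.j := by
  intro v hv
  simp only [missingCore, mem_filter, mem_univ, true_and] at hv
  by_contra hvj
  by_cases hvr : v ∈ C.removed
  · obtain ⟨s, hs, hsF, hvs⟩ :=
      C.exists_notMem_family_of_val_lt (C.mem_Iv.1 ((mem_union.1 hvr).resolve_right hvj))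
    exact hvs (hv s hs hsF)
  · exact hvr (hv _ (C.card_of_mem_blocks le_rfl (by omega) C.removed_mem_blocks)
      C.removed_notMem_family)

lemma not_isInitColex_image (σ : Equiv.Perm (Fin C.n)) :
    ¬ IsInitColex C.n C.k (C.family.image (image σ)) := fun h => by
  have hj := C.j_succ_lt_k
  have hcore := card_le_card (C.pre_subset_missingCore h (by
    rw [card_image_of_injective _ (image_injective σ.injective), C.card_family]))
  rw [missingCore_image_perm, card_map, C.card_pre (by omega)] at hcore
  have := card_le_card C.missingCore_family_subset
  rw [C.card_pre (by omega)] at this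
  omega

end GapCascade

theorem stmt10_general (k m : ℕ) (a : ℕ → ℕ)
    (hdec : kBinDecomp k m (k - 1) a)
    (hgap : (a (k - 1) : ℤ) < (a 0 : ℤ) - k + 1) :
    ∃ (n : ℕ) (S : Finset (Finset (Fin n))),
      (∀ s ∈ S, s.card = k) ∧ S.card = m ∧
      (Finset.shadow S).card = ∑ i ∈ Finset.range k, (a i).choose (k - 1 - i) ∧
      ∀ σ : Equiv.Perm (Fin n), ¬ IsInitColex n k (S.image (Finset.image σ)) := by
  have hge : ∀ i, i < k → k - i ≤ a i := fun i hi => hdec.sub_le (by omega)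
  obtain ⟨hk, hdecr, -, rfl⟩ := hdec
  obtain ⟨j, hj, hjgap, hstair⟩ := exists_first_gap hdecr (by omega)
  let C : GapCascade := ⟨k, a, j, by omega, fun i hi => hdecr i (by omega), hge, hstair, hjgap⟩
  refine ⟨C.n, C.family, fun s => C.card_of_mem_family, ?_, C.card_shadow_family,
    C.not_isInitColex_image⟩
  rw [C.card_family, Nat.sub_add_cancel (by omega : 1 ≤ k)]

/-- When the `k`-binomial decomposition has length `k` and `a (k-1) < a 0 - k + 1`,
there is an extremal family that is not isomorphic to an initial colex segment. -/
theorem stmt10 (k m : ℕ) (a : ℕ → ℕ)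
    (hk : 0 < k) (hm : 0 < m) (hdec : kBinDecomp k m (k - 1) a)
    (hgap : (a (k - 1) : ℤ) < (a 0 : ℤ) - k + 1) :
    ∃ (n : ℕ) (S : Finset (Finset (Fin n))),
      (∀ s ∈ S, s.card = k) ∧ S.card = m ∧
      (Finset.shadow S).card = ∑ i ∈ Finset.range k, (a i).choose (k - 1 - i) ∧
      ∀ σ : Equiv.Perm (Fin n), ¬ IsInitColex n k (S.image (Finset.image σ)) :=
  stmt10_general k m a hdec hgap
end

section
/- The hypotenusal numbers satisfy a[i] ≥ C(a[i-1]+1, 2) + a[i-1] for all i ≥ 2; consequently a[i] ≥ a[i-1]²/2 for i ≥ 2, and a[i] ≥ 2^(2^(i-2)+1) for all i ≥ 4. -/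
open Finset

/-- Hamilton's numbers (rational-valued), following the classical recursion. -/
def hamilton : ℕ → ℚ
  | 0 => 2
  | 1 => 2
  | (m + 2) =>
      2 + ∑ i ∈ Finset.range (m + 1),
        (-1 : ℚ) ^ (i + 2) *
          (∏ j ∈ Finset.range (i + 2), (hamilton (m + 1 - i) - (j : ℚ))) / ((i + 2).factorial : ℚ)
  termination_by m => m
  decreasing_by simp_wf <;> omega

/-- The hypotenusal numbers `a[n]` (OEIS A001660): `a[0] = 1` and
`a[n] = h[n+1] - h[n]` for `n > 0`, where `h` are Hamilton's numbers.
(`hypot 1 = 1`, `hypot 2 = 2`, `hypot 3 = 6`, `hypot 4 = 36`, `hypot 5 = 876`, …) -/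
def hypot (i : ℕ) : ℚ := if i = 0 then 1 else hamilton (i + 1) - hamilton i

/-!
Clearing denominators, Hamilton's recursion reads
`h (m + 2) = 2 + ∑ i ≤ m, (-1) ^ i * C(h (m + 1 - i), i + 2)`.
As long as consecutive values satisfy `h j ^ 2 ≤ 3 * h (j + 1)`, the terms of this alternating sum
decrease (`C(g, k + 1) ≤ C(x, k)` for `k ≥ 2` as soon as `C(g, 3) ≤ C(x, 2)`), so it is at least its first two terms: `h (m + 2) ≥ 2 + C(h (m + 1), 2) - C(h m, 3)`.
This bound keeps `h` natural-valued and, once `h m ≥ 6`, propagates the growth condition to the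
next pair. Since `a i = h (i + 1) - h i`, the same bound, with `h (i - 1) ^ 2 ≤ 3 * h i`, gives the
first inequality; the other two follow from it by squaring.
-/

section Alternating

variable {R : Type*} [Ring R]

lemma sum_range_add_two_neg_one_pow_mul (T : ℕ → R) (n : ℕ) :
    ∑ i ∈ range (n + 2), (-1) ^ i * T i = T 0 - T 1 + ∑ i ∈ range n, (-1) ^ i * T (i + 2) := by
  simp only [sum_range_succ', pow_succ, mul_neg, mul_one, neg_mul, sum_neg_distrib, add_assoc,
    Nat.reduceAdd, pow_zero, zero_add, one_mul, neg_add_rev, neg_neg]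
  abel

variable [PartialOrder R] [IsOrderedRing R]

lemma sum_range_neg_one_pow_mul_nonneg {T : ℕ → R} {n : ℕ} (hT0 : 0 ≤ T)
    (hT : ∀ i, i + 1 < n → T (i + 1) ≤ T i) : 0 ≤ ∑ i ∈ range n, (-1) ^ i * T i := by
  induction n using Nat.strong_induction_on generalizing T with
  | _ n ih =>
  match n with
  | 0 => simp
  | 1 => simpa using hT0 0
  | n + 2 =>
    rw [sum_range_add_two_neg_one_pow_mul]
    exact add_nonneg (sub_nonneg.2 (hT 0 (by omega)))
      (ih n (by omega) (fun i => hT0 (i + 2)) fun i hi => hT (i + 2) (by omega))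

lemma sub_le_sum_range_neg_one_pow_mul {T : ℕ → R} {n : ℕ} (hT0 : 0 ≤ T)
    (hT : ∀ i, i < n → T (i + 1) ≤ T i) : T 0 - T 1 ≤ ∑ i ∈ range (n + 1), (-1) ^ i * T i := by
  match n with
  | 0 => simpa using hT0 1
  | n + 1 =>
    rw [sum_range_add_two_neg_one_pow_mul]
    exact le_add_of_nonneg_right
      (sum_range_neg_one_pow_mul_nonneg (fun i => hT0 (i + 2)) fun i hi => hT (i + 2) (by omega))

end Alternating

namespace Nat

lemma cast_choose_eq_prod_range_div {K : Type*} [Field K] [CharZero K] (a k : ℕ) :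
    (a.choose k : K) = (∏ j ∈ range k, ((a : K) - j)) / k.factorial := by
  rw [cast_choose_eq_descPochhammer_div, descPochhammer_eval_eq_prod_range]

lemma cast_choose_three {K : Type*} [Field K] [CharZero K] (a : ℕ) :
    (a.choose 3 : K) = a * (a - 1) * (a - 2) / 6 := by
  simp [cast_choose_eq_prod_range_div, prod_range_succ, factorial]

lemma le_of_sq_le_three_mul {g x : ℕ} (h : g ^ 2 ≤ 3 * x) : g ≤ x := by
  by_contra! hlt
  nlinarith [Nat.pow_le_pow_left hlt 2, le_self_pow two_ne_zero x]

lemma choose_three_le_choose_two_of_sq_le {g x : ℕ} (h : g ^ 2 ≤ 3 * x) :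
    g.choose 3 ≤ x.choose 2 := by
  rcases lt_or_ge g 3 with hg | hg
  · simp [choose_eq_zero_of_lt hg]
  have hq : ((g.choose 3 : ℕ) : ℚ) ≤ (x.choose 2 : ℕ) := by
    rw [cast_choose_three, cast_choose_two]
    have h' : (g : ℚ) ^ 2 ≤ 3 * x := by exact_mod_cast h
    have hg' : (3 : ℚ) ≤ g := by exact_mod_cast hg
    have hgx : (g : ℚ) ≤ x := by exact_mod_cast le_of_sq_le_three_mul h
    nlinarith [mul_le_mul_of_nonneg_right h' (by linarith : (0 : ℚ) ≤ x - 1),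
      mul_le_mul_of_nonneg_left hgx (by positivity : (0 : ℚ) ≤ g ^ 2)]
  exact_mod_cast hq

lemma choose_succ_le_choose_of_choose_three_le {g x k : ℕ} (h : g.choose 3 ≤ x.choose 2)
    (hgx : g ≤ x + 1) (hk : 2 ≤ k) : g.choose (k + 1) ≤ x.choose k := by
  -- multiply by `C(k, 2) ≤ C(k + 1, 3)`, then split off `C(g, 3)` and `C(x, 2)` by `Nat.choose_mul`
  have hk3 : k.choose 2 ≤ (k + 1).choose 3 := by
    rw [choose_succ_succ]; exact le_add_right _ _
  refine le_of_mul_le_mul_right ?_ (choose_pos hk)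
  calc g.choose (k + 1) * k.choose 2 ≤ g.choose (k + 1) * (k + 1).choose 3 :=
        Nat.mul_le_mul_left _ hk3
    _ = g.choose 3 * (g - 3).choose (k - 2) := by rw [choose_mul (by omega)]; rfl
    _ ≤ x.choose 2 * (x - 2).choose (k - 2) :=
        Nat.mul_le_mul h (choose_le_choose _ (by omega))
    _ = x.choose k * k.choose 2 := (choose_mul hk).symm

end Nat

lemma cast_two_add_choose_le {g x X : ℕ} (hX : 2 + x.choose 2 ≤ X + g.choose 3) :
    2 + (x : ℚ) * (x - 1) / 2 ≤ X + g * (g - 1) * (g - 2) / 6 := by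
  rw [← Nat.cast_choose_two, ← Nat.cast_choose_three]; exact_mod_cast hX

lemma sq_le_three_mul_of_two_add_choose_le {g x X : ℕ} (hg : 6 ≤ g) (hgx : g ^ 2 ≤ 3 * x)
    (hX : 2 + x.choose 2 ≤ X + g.choose 3) : x ^ 2 ≤ 3 * X := by
  have hX' := cast_two_add_choose_le hX
  have hg' : (6 : ℚ) ≤ g := by exact_mod_cast hg
  have hgx' : (g : ℚ) ^ 2 ≤ 3 * x := by exact_mod_cast hgx
  -- at `x = g ^ 2 / 3` the claim is `(g - 6) * (g ^ 2 * (g - 3) - 18) ≥ 0`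
  have : (x : ℚ) ^ 2 ≤ 3 * X := by
    nlinarith [mul_nonneg (sub_nonneg.2 hgx') (by nlinarith : (0 : ℚ) ≤ 3 * x + g ^ 2 - 9),
      mul_nonneg (sub_nonneg.2 hg') (by nlinarith : (0 : ℚ) ≤ g ^ 2 * (g - 3) - 18)]
  exact_mod_cast this

lemma sub_le_of_two_add_choose_le {g x X : ℕ} (hg : 3 ≤ g) (hgx : g ^ 2 ≤ 3 * x)
    (hX : 2 + x.choose 2 ≤ X + g.choose 3) :
    ((x : ℚ) - g + 1) * (x - g) / 2 + (x - g) ≤ X - x := by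
  have hX' := cast_two_add_choose_le hX
  have hg' : (3 : ℚ) ≤ g := by exact_mod_cast hg
  have hgx' : (g : ℚ) ^ 2 ≤ 3 * x := by exact_mod_cast hgx
  nlinarith [mul_nonneg (sub_nonneg.2 hgx') (by linarith : (0 : ℚ) ≤ 2 * g - 6),
    mul_nonneg (sub_nonneg.2 hg') (sq_nonneg ((g : ℚ) - 3))]

lemma hamilton_add_two (m : ℕ) (u : ℕ → ℕ) (hu : ∀ j ≤ m + 1, hamilton j = u j) :
    hamilton (m + 2) =
      2 + ∑ i ∈ range (m + 1), (-1) ^ i * ((u (m + 1 - i)).choose (i + 2) : ℚ) := by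
  rw [hamilton]
  congr 1
  refine sum_congr rfl fun i _ => ?_
  rw [hu _ (Nat.sub_le _ _), Nat.cast_choose_eq_prod_range_div, pow_add]
  ring

@[simp] lemma hamilton_zero : hamilton 0 = 2 := by rw [hamilton]

@[simp] lemma hamilton_one : hamilton 1 = 2 := by rw [hamilton]

@[simp] lemma hamilton_two : hamilton 2 = 3 := by
  rw [hamilton]; norm_num [sum_range_succ, prod_range_succ]

@[simp] lemma hamilton_three : hamilton 3 = 5 := by
  rw [hamilton]; norm_num [sum_range_succ, prod_range_succ, Nat.factorial]

@[simp] lemma hamilton_four : hamilton 4 = 11 := by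
  rw [hamilton]; norm_num [sum_range_succ, prod_range_succ, Nat.factorial]

@[simp] lemma hamilton_five : hamilton 5 = 47 := by
  rw [hamilton]; norm_num [sum_range_succ, prod_range_succ, Nat.factorial]

lemma exists_hamilton_add_two_eq_natCast {m : ℕ} {u : ℕ → ℕ}
    (hu : ∀ j ≤ m + 1, hamilton j = u j) (hsq : ∀ j ≤ m, u j ^ 2 ≤ 3 * u (j + 1)) :
    ∃ X : ℕ, hamilton (m + 2) = X ∧ 2 + (u (m + 1)).choose 2 ≤ X + (u m).choose 3 := by
  set T : ℕ → ℤ := fun i => (u (m + 1 - i)).choose (i + 2) with hT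
  set z : ℤ := 2 + ∑ i ∈ range (m + 1), (-1) ^ i * T i
  have hz : hamilton (m + 2) = z := by
    rw [hamilton_add_two m u hu]; push_cast [z, T]; rfl
  have hTanti : ∀ i < m, T (i + 1) ≤ T i := by
    intro i hi
    have hj := hsq (m - i) (by omega)
    rw [show m - i + 1 = m + 1 - i by omega] at hj
    have hle := Nat.choose_succ_le_choose_of_choose_three_le
      (Nat.choose_three_le_choose_two_of_sq_le hj)
      (by linarith [Nat.le_of_sq_le_three_mul hj]) (by omega : 2 ≤ i + 2)
    simp only [hT, show m + 1 - (i + 1) = m - i by omega]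
    exact_mod_cast hle
  have hlow := sub_le_sum_range_neg_one_pow_mul (fun i => by positivity) hTanti
  simp only [hT, Nat.sub_zero, Nat.add_sub_cancel] at hlow
  have h32 : ((u m).choose 3 : ℤ) ≤ (u (m + 1)).choose 2 := by
    exact_mod_cast Nat.choose_three_le_choose_two_of_sq_le (hsq m le_rfl)
  have hz0 : 0 ≤ z := by linarith
  refine ⟨z.toNat, by rw [hz]; exact_mod_cast (Int.toNat_of_nonneg hz0).symm, ?_⟩
  zify [Int.toNat_of_nonneg hz0]
  linarith

-- `hamilton` turns out to be natural-valued, so the floor loses nothing.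
def hamiltonNat (n : ℕ) : ℕ := ⌊hamilton n⌋₊

lemma hamiltonNat_eq_of_hamilton_eq {n N : ℕ} (h : hamilton n = N) : hamiltonNat n = N := by
  simp [hamiltonNat, h]

lemma hamilton_eq_hamiltonNat_and_sq_le {n : ℕ} (hn : 4 ≤ n) :
    (∀ j ≤ n + 1, hamilton j = hamiltonNat j) ∧
      (∀ j ≤ n, hamiltonNat j ^ 2 ≤ 3 * hamiltonNat (j + 1)) ∧ 6 ≤ hamiltonNat n := by
  induction n, hn using Nat.le_induction with
  | base =>
    refine ⟨fun j hj => ?_, fun j hj => ?_, by simp [hamiltonNat]⟩ <;>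
      interval_cases j <;> simp [hamiltonNat]
  | succ n _ ih =>
    obtain ⟨hu, hsq, hg⟩ := ih
    obtain ⟨X, hX, hlow⟩ := exists_hamilton_add_two_eq_natCast hu hsq
    have hXeq : hamiltonNat (n + 2) = X := hamiltonNat_eq_of_hamilton_eq hX
    have hsq' : hamiltonNat (n + 1) ^ 2 ≤ 3 * hamiltonNat (n + 2) :=
      hXeq ▸ sq_le_three_mul_of_two_add_choose_le hg (hsq n le_rfl) hlow
    refine ⟨fun j hj => ?_, fun j hj => ?_, hg.trans (Nat.le_of_sq_le_three_mul (hsq n le_rfl))⟩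
    · rcases Nat.lt_or_ge j (n + 2) with hj' | hj'
      · exact hu j (by omega)
      · rw [show j = n + 2 by omega, hX, hXeq]
    · rcases Nat.lt_or_ge j (n + 1) with hj' | hj'
      · exact hsq j (by omega)
      · rwa [show j = n + 1 by omega]

lemma hamilton_eq_hamiltonNat (n : ℕ) : hamilton n = hamiltonNat n :=
  (hamilton_eq_hamiltonNat_and_sq_le (by omega : 4 ≤ n + 4)).1 n (by omega)

lemma sq_hamiltonNat_le (n : ℕ) : hamiltonNat n ^ 2 ≤ 3 * hamiltonNat (n + 1) :=
  (hamilton_eq_hamiltonNat_and_sq_le (by omega : 4 ≤ n + 4)).2.1 n (by omega)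

lemma monotone_hamiltonNat : Monotone hamiltonNat :=
  monotone_nat_of_le_succ fun n => Nat.le_of_sq_le_three_mul (sq_hamiltonNat_le n)

lemma three_le_hamiltonNat {n : ℕ} (hn : 2 ≤ n) : 3 ≤ hamiltonNat n :=
  (hamiltonNat_eq_of_hamilton_eq (N := 3) (by simp)).ge.trans (monotone_hamiltonNat hn)

lemma two_add_choose_le_hamiltonNat (m : ℕ) :
    2 + (hamiltonNat (m + 1)).choose 2 ≤ hamiltonNat (m + 2) + (hamiltonNat m).choose 3 := by
  obtain ⟨X, hX, hlow⟩ := exists_hamilton_add_two_eq_natCast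
    (fun j _ => hamilton_eq_hamiltonNat j) (fun j _ => sq_hamiltonNat_le j)
  rwa [hamiltonNat_eq_of_hamilton_eq hX]

lemma hypot_eq_sub {i : ℕ} (hi : 1 ≤ i) : hypot i = hamiltonNat (i + 1) - hamiltonNat i := by
  rw [hypot, if_neg (by omega), hamilton_eq_hamiltonNat, hamilton_eq_hamiltonNat]

lemma hypot_nonneg (i : ℕ) : 0 ≤ hypot i := by
  rcases Nat.eq_zero_or_pos i with rfl | hi
  · simp [hypot]
  · rw [hypot_eq_sub hi, sub_nonneg]
    exact_mod_cast monotone_hamiltonNat (Nat.le_succ i)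

lemma choose_two_add_le_hypot {i : ℕ} (hi : 2 ≤ i) :
    (hypot (i - 1) + 1) * hypot (i - 1) / 2 + hypot (i - 1) ≤ hypot i := by
  obtain rfl | hi := hi.eq_or_lt
  · norm_num [hypot]
  obtain ⟨m, rfl⟩ : ∃ m, i = m + 1 := ⟨i - 1, by omega⟩
  rw [Nat.add_sub_cancel, hypot_eq_sub (by omega), hypot_eq_sub (by omega)]
  exact sub_le_of_two_add_choose_le (three_le_hamiltonNat (by omega)) (sq_hamiltonNat_le m)
    (two_add_choose_le_hamiltonNat m)

lemma sq_hypot_div_two_le {i : ℕ} (hi : 2 ≤ i) : hypot (i - 1) ^ 2 / 2 ≤ hypot i := by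
  nlinarith [choose_two_add_le_hypot hi, hypot_nonneg (i - 1)]

lemma two_pow_two_mul_add_one_le {K : Type*} [Field K] [LinearOrder K] [IsStrictOrderedRing K]
    {e : ℕ} {a b : K} (ha : 2 ^ (e + 1) ≤ a) (hb : a ^ 2 / 2 ≤ b) : 2 ^ (2 * e + 1) ≤ b :=
  calc (2 : K) ^ (2 * e + 1) = (2 ^ (e + 1)) ^ 2 / 2 := by ring
    _ ≤ a ^ 2 / 2 := by gcongr
    _ ≤ b := hb

lemma two_pow_le_hypot {i : ℕ} (hi : 4 ≤ i) : (2 : ℚ) ^ (2 ^ (i - 2) + 1) ≤ hypot i := by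
  induction i, hi using Nat.le_induction with
  | base => norm_num [hypot]
  | succ i hi ih =>
    rw [show 2 ^ (i + 1 - 2) = 2 * 2 ^ (i - 2) by rw [← pow_succ']; congr 1; omega]
    exact two_pow_two_mul_add_one_le ih (sq_hypot_div_two_le (by omega : 2 ≤ i + 1))

/-- Lower bounds for the hypotenusal numbers: `a[i] ≥ C(a[i-1]+1, 2) + a[i-1]` for `i ≥ 2`,
hence `a[i] ≥ a[i-1]²/2` for `i ≥ 2` and `a[i] ≥ 2^(2^(i-2)+1)` for `i ≥ 4`. -/
theorem stmt15 :
    (∀ i, 2 ≤ i →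
      (hypot (i - 1) + 1) * hypot (i - 1) / 2 + hypot (i - 1) ≤ hypot i) ∧
    (∀ i, 2 ≤ i → (hypot (i - 1)) ^ 2 / 2 ≤ hypot i) ∧
    (∀ i, 4 ≤ i → (2 : ℚ) ^ (2 ^ (i - 2) + 1) ≤ hypot i) :=
  ⟨fun _ => choose_two_add_le_hypot, fun _ => sq_hypot_div_two_le, fun _ => two_pow_le_hypot⟩
end
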